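/- arXiv:2111.14050 — 4 statements merged into one kernel-verified Lean document; each statement's English description precedes it below -/
import Mathlib

section
/- Let c ∈ ℤ^n, set c* = ‖c‖₁ + 2 where ‖c‖₁ = Σ_{j=1}^n |c(j)|, and define v ∈ ℝ^n by v(j) = (c*)^j. For w ∈ {0,1}^n define f(w) = max({j ∈ {1,…,n} : w(j) = 1} ∪ {0}). Let x, u⁰, u¹ ∈ {0,1}^n satisfy f(u⁰) = f(u¹) > f(x), ⟨c, u⁰ − x⟩ ≥ 1, ⟨c, u¹ − x⟩ ≥ 1, and ⟨c, u⁰⟩ > ⟨c, u¹⟩. Then ⟨v, u⁰ − x⟩ > 0, ⟨v, u¹ − x⟩ > 0, and ⟨c, u⁰ − x⟩ / ⟨v, u⁰ − x⟩ > ⟨c, u¹ − x⟩ / ⟨v, u¹ − x⟩. -/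
open Finset

attribute [local instance] Classical.propDecidable

noncomputable section

/-- Standard dot product on `Fin n → ℝ`. -/
def dotR {n : ℕ} (c x : Fin n → ℝ) : ℝ := ∑ i, c i * x i

/-- A polytope: the convex hull of a finite nonempty set of points. -/
def IsPolytope {n : ℕ} (P : Set (Fin n → ℝ)) : Prop :=
  ∃ V : Finset (Fin n → ℝ), V.Nonempty ∧ P = convexHull ℝ (V : Set (Fin n → ℝ))

/-- A 0/1 polytope: the convex hull of a finite nonempty subset of `{0,1}^n`. -/
def IsPolytope01 {n : ℕ} (P : Set (Fin n → ℝ)) : Prop :=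
  ∃ V : Finset (Fin n → ℝ), V.Nonempty ∧ (∀ w ∈ V, ∀ i, w i = 0 ∨ w i = 1) ∧
    P = convexHull ℝ (V : Set (Fin n → ℝ))

/-- A vertex of `P` is an extreme point of `P`. -/
def IsVertex {n : ℕ} (P : Set (Fin n → ℝ)) (x : Fin n → ℝ) : Prop :=
  x ∈ P.extremePoints ℝ

/-- Two distinct vertices are adjacent when the segment between them is a face. -/
def Adjacent {n : ℕ} (P : Set (Fin n → ℝ)) (x y : Fin n → ℝ) : Prop :=
  IsVertex P x ∧ IsVertex P y ∧ x ≠ y ∧ IsExtreme ℝ P (segment ℝ x y)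

/-- `u` is a `w`-improving neighbor of `x`. -/
def ImpNbr {n : ℕ} (P : Set (Fin n → ℝ)) (w x u : Fin n → ℝ) : Prop :=
  Adjacent P x u ∧ dotR w x < dotR w u

/-- A Shadow-rule path on `P` with auxiliary vector `v` and objective `c`:
vertices `x 0, …, x k`, each step a `v`-improving neighbor maximizing the slope
`⟨c, u − xᵢ⟩ / ⟨v, u − xᵢ⟩` over all `v`-improving neighbors, and the last vertex
has no `v`-improving neighbor. -/
def ShadowPath {n : ℕ} (P : Set (Fin n → ℝ)) (c v : Fin n → ℝ) (k : ℕ)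
    (x : ℕ → Fin n → ℝ) : Prop :=
  (∀ i ≤ k, IsVertex P (x i)) ∧
  (∀ i < k, ImpNbr P v (x i) (x (i + 1)) ∧
    ∀ u, ImpNbr P v (x i) u →
      dotR c (u - x i) / dotR v (u - x i)
        ≤ dotR c (x (i + 1) - x i) / dotR v (x (i + 1) - x i)) ∧
  (∀ u, ¬ ImpNbr P v (x k) u)

/-- `f(u)` relative to `x0`: the largest index (in `1, …, n` labelling) where `u`
differs from `x0`, and `0` if there is none. -/
def lastIdx {n : ℕ} (x0 u : Fin n → ℝ) : ℕ :=
  (Finset.univ.filter fun j : Fin n => u j ≠ x0 j).sup fun j => (j : ℕ) + 1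

/-- `f(w)` for a 0/1 vector: the largest index (in `1, …, n` labelling) with
`w j = 1`, and `0` for the zero vector. -/
def lastOne {n : ℕ} (w : Fin n → ℝ) : ℕ :=
  (Finset.univ.filter fun j : Fin n => w j = 1).sup fun j => (j : ℕ) + 1

/-- Claim 3 (slope comparison, equal `f`-values): with `c* = ‖c‖₁ + 2` and
`v(j) = (c*)ʲ`, if `f(u⁰) = f(u¹) > f(x)`, both `u⁰, u¹` are `c`-improving by at
least `1`, and `⟨c, u⁰⟩ > ⟨c, u¹⟩`, then both are `v`-improving and `u⁰` has strictly
larger slope. -/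
theorem slope_comparison_equal_f {n : ℕ} (c : Fin n → ℤ) (cR : Fin n → ℝ)
    (hcR : cR = fun i => (c i : ℝ))
    (cstar : ℝ) (hcstar : cstar = (∑ j, |(c j : ℝ)|) + 2)
    (v : Fin n → ℝ) (hv : v = fun j : Fin n => cstar ^ ((j : ℕ) + 1))
    (x u0 u1 : Fin n → ℝ)
    (hx : ∀ j, x j = 0 ∨ x j = 1) (hu0 : ∀ j, u0 j = 0 ∨ u0 j = 1)
    (hu1 : ∀ j, u1 j = 0 ∨ u1 j = 1)
    (hfeq : lastOne u0 = lastOne u1) (hfgt : lastOne x < lastOne u0)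
    (hc0 : 1 ≤ dotR cR (u0 - x)) (hc1 : 1 ≤ dotR cR (u1 - x))
    (hcc : dotR cR u1 < dotR cR u0) :
    0 < dotR v (u0 - x) ∧ 0 < dotR v (u1 - x) ∧
      dotR cR (u1 - x) / dotR v (u1 - x) < dotR cR (u0 - x) / dotR v (u0 - x) := by
  classical
  have hsum0 : (0:ℝ) ≤ ∑ j, |(c j : ℝ)| := Finset.sum_nonneg fun j _ => abs_nonneg _
  have hcs2 : (2:ℝ) ≤ cstar := by rw [hcstar]; linarith
  have hcs0 : (0:ℝ) ≤ cstar := by linarith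
  have hvj : ∀ j : Fin n, v j = cstar ^ ((j : ℕ) + 1) := fun j => by rw [hv]
  have hcRj : ∀ j, cR j = (c j : ℝ) := fun j => by rw [hcR]
  set F := lastOne u0 with hFdef
  have hF1 : 1 ≤ F := by omega
  -- find the common top index j0
  have hne0 : (Finset.univ.filter fun j : Fin n => u0 j = 1).Nonempty := by
    by_contra h
    rw [Finset.not_nonempty_iff_eq_empty] at h
    have : F = 0 := by rw [hFdef, lastOne, h, Finset.sup_empty]; rfl
    omega
  obtain ⟨j0, hj0mem, hj0sup⟩ :=
    Finset.exists_mem_eq_sup _ hne0 (fun j : Fin n => (j : ℕ) + 1)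
  have hu0j0 : u0 j0 = 1 := (Finset.mem_filter.mp hj0mem).2
  have hj0F : F = (j0 : ℕ) + 1 := hj0sup
  have hne1 : (Finset.univ.filter fun j : Fin n => u1 j = 1).Nonempty := by
    by_contra h
    rw [Finset.not_nonempty_iff_eq_empty] at h
    have : lastOne u1 = 0 := by rw [lastOne, h, Finset.sup_empty]; rfl
    omega
  obtain ⟨j1, hj1mem, hj1sup⟩ :=
    Finset.exists_mem_eq_sup _ hne1 (fun j : Fin n => (j : ℕ) + 1)
  have hj1F : (j1 : ℕ) + 1 = F := by
    rw [hfeq]; exact hj1sup.symm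
  have hj10 : j1 = j0 := by apply Fin.ext; omega
  have hu1j0 : u1 j0 = 1 := by rw [← hj10]; exact (Finset.mem_filter.mp hj1mem).2
  -- vanishing above lastOne
  have hzero : ∀ w : Fin n → ℝ, (∀ j, w j = 0 ∨ w j = 1) →
      ∀ j : Fin n, lastOne w < (j : ℕ) + 1 → w j = 0 := by
    intro w hw j hj
    rcases hw j with h | h
    · exact h
    · exfalso
      have : (j : ℕ) + 1 ≤ lastOne w :=
        Finset.le_sup (f := fun j : Fin n => (j : ℕ) + 1)
          (Finset.mem_filter.mpr ⟨Finset.mem_univ _, h⟩)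
      omega
  have hx0 : ∀ j : Fin n, j0 ≤ j → x j = 0 := by
    intro j hj
    apply hzero x hx
    have := Fin.le_def.mp hj
    omega
  -- tail set and tail sum
  set T : Finset (Fin n) := Finset.univ.filter (fun j => j < j0) with hT
  set S : ℝ := ∑ j ∈ T, cstar ^ ((j : ℕ) + 1) with hS
  have hS0 : (0:ℝ) ≤ S := Finset.sum_nonneg fun j _ => pow_nonneg hcs0 _
  -- geometric identity
  have hSgeom : (cstar - 1) * S = cstar ^ F - cstar := by
    have h1 : S = ∑ k ∈ Finset.range (j0 : ℕ), cstar ^ (k + 1) := by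
      rw [hS, hT, Finset.sum_filter]
      have h2 : ∀ j : Fin n,
          (if j < j0 then cstar ^ ((j:ℕ) + 1) else 0)
            = (fun k : ℕ => if k < (j0:ℕ) then cstar ^ (k + 1) else 0) (j : ℕ) := by
        intro j
        simp only [Fin.lt_def]
      rw [Finset.sum_congr rfl fun j _ => h2 j,
        Fin.sum_univ_eq_sum_range (fun k : ℕ => if k < (j0:ℕ) then cstar ^ (k + 1) else 0) n]
      rw [← Finset.sum_subset (Finset.range_subset_range.mpr j0.isLt.le)]
      · apply Finset.sum_congr rfl
        intro k hk
        exact if_pos (Finset.mem_range.mp hk)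
      · intro k _ hk
        exact if_neg (by simpa using hk)
    have hS2 : S = cstar * ∑ k ∈ Finset.range (j0 : ℕ), cstar ^ k := by
      rw [h1, Finset.mul_sum]
      exact Finset.sum_congr rfl fun k _ => by ring
    have hg := geom_sum_mul cstar (j0 : ℕ)
    rw [hj0F, pow_succ]
    linear_combination (cstar - 1) * hS2 + cstar * hg
  -- decomposition of dot products
  have hsplit : ∀ w : Fin n → ℝ, (∀ j, w j = 0 ∨ w j = 1) → w j0 = 1 → lastOne w = F →
      dotR v (w - x) = cstar ^ F + ∑ j ∈ T, v j * (w j - x j) := by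
    intro w hw hwj0 hwF
    have h0 : dotR v (w - x) = ∑ j, v j * (w j - x j) := by
      simp [dotR]
    rw [h0, ← Finset.sum_filter_add_sum_filter_not Finset.univ (fun j => j < j0)
      (fun j => v j * (w j - x j)), ← hT, add_comm]
    congr 1
    rw [Finset.sum_eq_single_of_mem j0 (by simp)]
    · rw [hwj0, hx0 j0 le_rfl, hvj, hj0F]; ring
    · intro j hj hne
      have hle : j0 ≤ j := not_lt.mp (Finset.mem_filter.mp hj).2
      have hlt : (j0:ℕ) < (j:ℕ) := by
        rcases lt_or_eq_of_le (Fin.le_def.mp hle) with h | h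
        · exact h
        · exact absurd (Fin.ext h.symm) hne
      have hw0 : w j = 0 := hzero w hw j (by omega)
      have hxj : x j = 0 := hx0 j hle
      rw [hw0, hxj]; ring
  have hsp0 : dotR v (u0 - x) = cstar ^ F + ∑ j ∈ T, v j * (u0 j - x j) :=
    hsplit u0 hu0 hu0j0 hFdef.symm
  have hsp1 : dotR v (u1 - x) = cstar ^ F + ∑ j ∈ T, v j * (u1 j - x j) :=
    hsplit u1 hu1 hu1j0 (by rw [← hfeq])
  -- tail bound
  have htb : ∀ g : Fin n → ℝ, (∀ j, |g j| ≤ 1) → |∑ j ∈ T, v j * g j| ≤ S := by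
    intro g hg
    calc |∑ j ∈ T, v j * g j| ≤ ∑ j ∈ T, |v j * g j| := Finset.abs_sum_le_sum_abs _ _
      _ ≤ S := by
        rw [hS]
        apply Finset.sum_le_sum
        intro j _
        have h2 : (0:ℝ) ≤ cstar ^ ((j:ℕ) + 1) := pow_nonneg hcs0 _
        rw [abs_mul, hvj, abs_of_nonneg h2]
        calc cstar ^ ((j:ℕ)+1) * |g j| ≤ cstar ^ ((j:ℕ)+1) * 1 :=
              mul_le_mul_of_nonneg_left (hg j) h2
          _ = cstar ^ ((j:ℕ)+1) := mul_one _
  have habs01 : ∀ p q : Fin n → ℝ, (∀ j, p j = 0 ∨ p j = 1) → (∀ j, q j = 0 ∨ q j = 1) →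
      ∀ j, |p j - q j| ≤ 1 := by
    intro p q hp hq j
    rcases hp j with h | h <;> rcases hq j with h' | h' <;> rw [h, h'] <;> norm_num
  have hb0 := abs_le.mp (htb (fun j => u0 j - x j) (habs01 u0 x hu0 hx))
  have hb1 := abs_le.mp (htb (fun j => u1 j - x j) (habs01 u1 x hu1 hx))
  -- positivity of denominators
  have hSle : S ≤ cstar ^ F - cstar := by
    nlinarith [mul_nonneg hS0 (by linarith : (0:ℝ) ≤ cstar - 2)]
  have hV0pos : 0 < dotR v (u0 - x) := by
    rw [hsp0]; linarith [hb0.1]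
  have hV1pos : 0 < dotR v (u1 - x) := by
    rw [hsp1]; linarith [hb1.1]
  -- difference bound
  have hdsum : ∑ j ∈ T, v j * (u0 j - x j) - ∑ j ∈ T, v j * (u1 j - x j)
      = ∑ j ∈ T, v j * (u0 j - u1 j) := by
    rw [← Finset.sum_sub_distrib]
    exact Finset.sum_congr rfl fun j _ => by ring
  have hdb := abs_le.mp (htb (fun j => u0 j - u1 j) (habs01 u0 u1 hu0 hu1))
  have hdiff : dotR v (u0 - x) - dotR v (u1 - x) ≤ S := by
    rw [hsp0, hsp1]
    have : (cstar ^ F + ∑ j ∈ T, v j * (u0 j - x j))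
        - (cstar ^ F + ∑ j ∈ T, v j * (u1 j - x j)) = ∑ j ∈ T, v j * (u0 j - u1 j) := by
      rw [← hdsum]; ring
    rw [this]
    exact hdb.2
  -- a1 ≤ cstar - 2
  have ha1le : dotR cR (u1 - x) ≤ cstar - 2 := by
    have : dotR cR (u1 - x) ≤ ∑ j, |(c j : ℝ)| := by
      rw [dotR]
      apply Finset.sum_le_sum
      intro j _
      calc cR j * (u1 - x) j ≤ |cR j * (u1 - x) j| := le_abs_self _
        _ = |cR j| * |(u1 - x) j| := abs_mul _ _
        _ ≤ |(c j : ℝ)| * 1 := by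
            rw [hcRj]
            exact mul_le_mul_of_nonneg_left (habs01 u1 x hu1 hx j) (abs_nonneg _)
        _ = |(c j : ℝ)| := mul_one _
    rw [hcstar]; linarith
  -- integrality: a0 - a1 ≥ 1
  have hlin : dotR cR (u0 - x) - dotR cR (u1 - x) = dotR cR u0 - dotR cR u1 := by
    simp only [dotR, Pi.sub_apply, mul_sub]
    rw [Finset.sum_sub_distrib, Finset.sum_sub_distrib]
    ring
  have hdelta : 1 ≤ dotR cR (u0 - x) - dotR cR (u1 - x) := by
    rw [hlin]
    set m : ℤ := ∑ j, c j * ((if u0 j = 1 then 1 else 0) - (if u1 j = 1 then 1 else 0))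
      with hm
    have hmR : (m : ℝ) = dotR cR u0 - dotR cR u1 := by
      rw [hm, dotR, dotR, ← Finset.sum_sub_distrib]
      push_cast
      apply Finset.sum_congr rfl
      intro j _
      rcases hu0 j with h0 | h0 <;> rcases hu1 j with h1 | h1 <;>
        rw [hcRj, h0, h1] <;> norm_num
    have hm0 : (0:ℝ) < (m : ℝ) := by rw [hmR]; linarith
    have : (1:ℤ) ≤ m := by exact_mod_cast hm0
    have : (1:ℝ) ≤ (m:ℝ) := by exact_mod_cast this
    linarith [hmR]
  refine ⟨hV0pos, hV1pos, ?_⟩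
  rw [div_lt_div_iff₀ hV1pos hV0pos]
  have ha1pos : (0:ℝ) ≤ dotR cR (u1 - x) := by linarith
  have p1 : dotR cR (u1 - x) * (dotR v (u0 - x) - dotR v (u1 - x))
      ≤ dotR cR (u1 - x) * S := mul_le_mul_of_nonneg_left hdiff ha1pos
  have p2 : dotR cR (u1 - x) * S ≤ (cstar - 2) * S :=
    mul_le_mul_of_nonneg_right ha1le hS0
  have p3 : 1 * dotR v (u1 - x)
      ≤ (dotR cR (u0 - x) - dotR cR (u1 - x)) * dotR v (u1 - x) :=
    mul_le_mul_of_nonneg_right hdelta hV1pos.le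
  have p4 : cstar ^ F - S ≤ dotR v (u1 - x) := by rw [hsp1]; linarith [hb1.1]
  nlinarith [p1, p2, p3, p4, hSgeom, hcs2]
end
end

section
/- Let c ∈ ℝ^n, let c* > 0 be a real number, and define v ∈ ℝ^n by v(j) = (c*)^j. For w ∈ {0,1}^n define f(w) = max({j ∈ {1,…,n} : w(j) = 1} ∪ {0}). Let x, u⁰, u¹ ∈ {0,1}^n with f(x) < f(u⁰) and f(x) < f(u¹), and set b = max(f(u⁰), f(u¹)). Assume ⟨c, u⁰ − x⟩ > 0, ⟨c, u¹ − x⟩ > 0, ⟨v, u⁰ − x⟩ > 0, and ⟨v, u¹ − x⟩ > 0. For 1 ≤ j ≤ n define κ_j = ⟨c, u⁰ − x⟩ · (u¹(j) − x(j)) − ⟨c, u¹ − x⟩ · (u⁰(j) − x(j)). Then ⟨c, u⁰ − x⟩ / ⟨v, u⁰ − x⟩ > ⟨c, u¹ − x⟩ / ⟨v, u¹ − x⟩ holds if and only if κ_b (c*)^b > Σ_{j=1}^{b−1} (−κ_j) (c*)^j. -/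
open Finset

attribute [local instance] Classical.propDecidable

noncomputable section

/-- The `m`-th coordinate of `z` in the `1, …, n` labelling (`0` if `m` is out of
range). -/
def coordAt {n : ℕ} (z : Fin n → ℝ) (m : ℕ) : ℝ :=
  ∑ j ∈ Finset.univ.filter fun j : Fin n => (j : ℕ) + 1 = m, z j


lemma coordAt_succ {n : ℕ} (z : Fin n → ℝ) (j : Fin n) :
    coordAt z ((j : ℕ) + 1) = z j := by
  unfold coordAt
  rw [show (Finset.univ.filter fun i : Fin n => (i : ℕ) + 1 = (j : ℕ) + 1) = {j} by
    ext i; simp [Fin.ext_iff]]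
  simp

lemma coordAt_zero_of_lt {n : ℕ} (z : Fin n → ℝ) (hz : ∀ j, z j = 0 ∨ z j = 1)
    (m : ℕ) (hm : lastOne z < m) : coordAt z m = 0 := by
  unfold coordAt
  apply Finset.sum_eq_zero
  intro j hj
  simp only [Finset.mem_filter] at hj
  rcases hz j with h | h
  · exact h
  · exfalso
    have : (j : ℕ) + 1 ≤ lastOne z :=
      Finset.le_sup (f := fun j : Fin n => (j : ℕ) + 1) (by simp [h])
    omega

lemma lastOne_le {n : ℕ} (z : Fin n → ℝ) : lastOne z ≤ n := by
  apply Finset.sup_le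
  intro j _
  exact j.isLt

/-- Claim 4 (equivalent characterization of the slope comparison): with
`v(j) = (c*)ʲ`, `b = max(f(u⁰), f(u¹))` and
`κⱼ = ⟨c, u⁰ − x⟩(u¹(j) − x(j)) − ⟨c, u¹ − x⟩(u⁰(j) − x(j))`, the slope of `u⁰`
beats that of `u¹` iff `κ_b (c*)ᵇ > Σ_{j=1}^{b−1} (−κⱼ)(c*)ʲ`. -/
theorem slope_comparison_iff_kappa {n : ℕ} (c : Fin n → ℝ) (cstar : ℝ)
    (hcstar : 0 < cstar)
    (v : Fin n → ℝ) (hv : v = fun j : Fin n => cstar ^ ((j : ℕ) + 1))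
    (x u0 u1 : Fin n → ℝ)
    (hx : ∀ j, x j = 0 ∨ x j = 1) (hu0 : ∀ j, u0 j = 0 ∨ u0 j = 1)
    (hu1 : ∀ j, u1 j = 0 ∨ u1 j = 1)
    (hf0 : lastOne x < lastOne u0) (hf1 : lastOne x < lastOne u1)
    (b : ℕ) (hb : b = max (lastOne u0) (lastOne u1))
    (hc0 : 0 < dotR c (u0 - x)) (hc1 : 0 < dotR c (u1 - x))
    (hv0 : 0 < dotR v (u0 - x)) (hv1 : 0 < dotR v (u1 - x))
    (κ : ℕ → ℝ)
    (hκ : ∀ m, κ m = dotR c (u0 - x) * (coordAt u1 m - coordAt x m)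
      - dotR c (u1 - x) * (coordAt u0 m - coordAt x m)) :
    (dotR c (u1 - x) / dotR v (u1 - x) < dotR c (u0 - x) / dotR v (u0 - x)) ↔
      (∑ m ∈ Finset.Icc 1 (b - 1), -κ m * cstar ^ m) < κ b * cstar ^ b := by
  set A := dotR c (u0 - x) with hA
  set B := dotR c (u1 - x) with hB
  set P := dotR v (u0 - x) with hP
  set Q := dotR v (u1 - x) with hQ
  have hb1 : 1 ≤ b := by omega
  have hbn : b ≤ n := by
    have h1 := lastOne_le u0
    have h2 := lastOne_le u1
    omega
  have hκ0 : ∀ m, b < m → κ m = 0 := by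
    intro m hm
    have h0 : lastOne u0 < m := by
      have := le_max_left (lastOne u0) (lastOne u1); omega
    have h1 : lastOne u1 < m := by
      have := le_max_right (lastOne u0) (lastOne u1); omega
    have h2 : lastOne x < m := by omega
    rw [hκ, coordAt_zero_of_lt u0 hu0 m h0, coordAt_zero_of_lt u1 hu1 m h1,
      coordAt_zero_of_lt x hx m h2]
    ring
  have hκj : ∀ j : Fin n, κ ((j : ℕ) + 1) = A * (u1 j - x j) - B * (u0 j - x j) := by
    intro j; rw [hκ]; simp [coordAt_succ]
  have key : A * Q - B * P = ∑ j : Fin n, κ ((j : ℕ) + 1) * cstar ^ ((j : ℕ) + 1) := by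
    simp only [hκj, hQ, hP, dotR, Pi.sub_apply, hv, Finset.mul_sum,
      ← Finset.sum_sub_distrib]
    apply Finset.sum_congr rfl
    intro j _
    ring
  have key2 : (∑ j : Fin n, κ ((j : ℕ) + 1) * cstar ^ ((j : ℕ) + 1))
      = ∑ m ∈ Finset.Icc 1 n, κ m * cstar ^ m := by
    rw [Fin.sum_univ_eq_sum_range (fun i => κ (i + 1) * cstar ^ (i + 1)),
      show Finset.Icc 1 n = Finset.Ico 1 (n + 1) by rw [Finset.Ico_add_one_right_eq_Icc],
      Finset.sum_Ico_eq_sum_range]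
    apply Finset.sum_congr (by norm_num)
    intro i _
    rw [Nat.add_comm]
  have key3 : (∑ m ∈ Finset.Icc 1 b, κ m * cstar ^ m)
      = ∑ m ∈ Finset.Icc 1 n, κ m * cstar ^ m := by
    apply Finset.sum_subset (Finset.Icc_subset_Icc_right hbn)
    intro m hm hm'
    simp only [Finset.mem_Icc] at hm hm'
    rw [hκ0 m (by omega)]
    ring
  have key4 : (∑ m ∈ Finset.Icc 1 b, κ m * cstar ^ m)
      = (∑ m ∈ Finset.Icc 1 (b - 1), κ m * cstar ^ m) + κ b * cstar ^ b := by
    obtain ⟨b', rfl⟩ : ∃ b', b = b' + 1 := ⟨b - 1, by omega⟩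
    rw [Finset.sum_Icc_succ_top (by omega)]
    simp
  have hsum : (∑ m ∈ Finset.Icc 1 (b - 1), -κ m * cstar ^ m)
      = -∑ m ∈ Finset.Icc 1 (b - 1), κ m * cstar ^ m := by
    rw [← Finset.sum_neg_distrib]
    apply Finset.sum_congr rfl
    intro m _
    ring
  rw [div_lt_div_iff₀ hv1 hv0, hsum]
  constructor <;> intro h <;> nlinarith [key, key2, key3, key4]
end
end

section
/- For every 0/1 polytope P ⊆ ℝ^n, every c ∈ ℝ^n, and every vertex x⁰ of P, there exists a finite sequence of vertices x⁰, x¹, …, x^k of P with k ≤ n such that for each i < k the vertices x^i and x^{i+1} are adjacent and ⟨c, x^i⟩ < ⟨c, x^{i+1}⟩, and x^k maximizes ⟨c,·⟩ over P. -/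
open Finset

attribute [local instance] Classical.propDecidable

noncomputable section

/-!
Fix a maximizer `xs` of `c` and induct on the Hamming distance from the current vertex `x`
to `xs`. On the face of `P` cut out by the smallest face of the cube containing `x` and `xs`,
`x` is still not optimal, so it has an improving neighbour `y` there; `y` keeps the
coordinates on which `x` and `xs` agree and changes some other one, so it is closer to `xs`.

An improving neighbour exists in any 0/1 polytope: tilting `c` by the largest slope
`⟨c, v - x⟩ / ⟨w, x - v⟩`, where `w = 2x - 1` exposes `x`, gives a functional maximized on a
face through `x` all of whose other vertices improve `c`, and in that face the vertex nearest
to `x` in Hamming distance spans an edge with `x`.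
-/

section Face

variable {E : Type*} [AddCommGroup E] [Module ℝ E] {l : E →ₗ[ℝ] ℝ} {M : ℝ}

theorem apply_le_of_mem_convexHull {s : Set E} (hM : ∀ v ∈ s, l v ≤ M) {z : E}
    (hz : z ∈ convexHull ℝ s) : l z ≤ M :=
  convexHull_min hM (convex_halfSpace_le l.isLinear M) hz

theorem mem_convexHull_filter_of_apply_eq {s : Finset E} (hM : ∀ v ∈ s, l v ≤ M) {z : E}
    (hz : z ∈ convexHull ℝ (s : Set E)) (hzM : l z = M) :
    z ∈ convexHull ℝ (s.filter (l · = M) : Set E) := by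
  rw [Finset.convexHull_eq] at hz
  obtain ⟨w, hw₀, hw₁, rfl⟩ := hz
  have hslack : ∑ v ∈ s, w v * (M - l v) = 0 := by
    rw [Finset.centerMass_eq_of_sum_1 _ _ hw₁, map_sum] at hzM
    simp only [mul_sub, Finset.sum_sub_distrib, ← Finset.sum_mul, hw₁, id, map_smul,
      smul_eq_mul] at hzM ⊢
    linarith
  have hface : ∀ v ∈ s, w v ≠ 0 → l v = M := fun v hv hwv => by
    have := (Finset.sum_eq_zero_iff_of_nonneg fun v hv =>
      mul_nonneg (hw₀ v hv) (sub_nonneg.2 (hM v hv))).1 hslack v hv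
    linarith [(mul_eq_zero.1 this).resolve_left hwv]
  rw [← Finset.centerMass_filter_ne_zero]
  refine Finset.centerMass_mem_convexHull _ (fun v hv => hw₀ v (Finset.mem_filter.1 hv).1)
    (by rw [Finset.sum_filter_ne_zero, hw₁]; exact one_pos) fun v hv => ?_
  obtain ⟨hv, hwv⟩ := Finset.mem_filter.1 hv
  exact Finset.mem_filter.2 ⟨hv, hface v hv hwv⟩

theorem isExtreme_convexHull_filter_apply_eq {s : Finset E} (hM : ∀ v ∈ s, l v ≤ M) :
    IsExtreme ℝ (convexHull ℝ (s : Set E)) (convexHull ℝ (s.filter (l · = M) : Set E)) := by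
  refine ⟨convexHull_mono (Finset.filter_subset _ s), fun x₁ hx₁ x₂ hx₂ z hz hseg => ?_⟩
  have hzM : l z = M := convexHull_min (fun v hv => (Finset.mem_filter.1 hv).2)
    (convex_hyperplane l.isLinear M) hz
  have h₁ := apply_le_of_mem_convexHull hM hx₁
  have h₂ := apply_le_of_mem_convexHull hM hx₂
  obtain ⟨a, b, ha, hb, hab, rfl⟩ := hseg
  simp only [map_add, map_smul, smul_eq_mul] at hzM
  refine mem_convexHull_filter_of_apply_eq hM hx₁ (le_antisymm h₁ ?_)
  by_contra! hlt
  have hM_comb : a * M + b * M = M := by rw [← add_mul, hab, one_mul]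
  linarith [mul_le_mul_of_nonneg_left h₂ hb.le, mul_lt_mul_of_pos_left hlt ha]

end Face

section Binary

variable {ι : Type*}

def IsBinary (v : ι → ℝ) : Prop := ∀ i, v i = 0 ∨ v i = 1

theorem mem_extremePoints_convexHull_of_isBinary {s : Set (ι → ℝ)}
    (hs : ∀ v ∈ s, IsBinary v) {v : ι → ℝ} (hv : v ∈ s) :
    v ∈ (convexHull ℝ s).extremePoints ℝ := by
  have hcube : convexHull ℝ s ⊆ Set.univ.pi fun _ => Set.Icc (0 : ℝ) 1 :=
    convexHull_min (fun w hw i _ => by rcases hs w hw i with h | h <;> simp [h])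
      (convex_pi fun _ _ => convex_Icc 0 1)
  refine inter_extremePoints_subset_extremePoints_of_subset hcube
    ⟨subset_convexHull ℝ s hv, ?_⟩
  rw [extremePoints_pi]
  intro i _
  rw [Set.extremePoints_Icc zero_le_one]
  exact hs v hv i

theorem IsBinary.eq_of_ne_of_ne {x y v : ι → ℝ} (hx : IsBinary x) (hy : IsBinary y)
    (hv : IsBinary v) {i : ι} (hvx : v i ≠ x i) (hyx : y i ≠ x i) : v i = y i := by
  rcases hx i with h | h <;> rcases hy i with h' | h' <;> rcases hv i with h'' | h'' <;>
    simp_all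

/-- The points of `s` in the smallest face of the unit cube containing `x` and `y`. -/
def cubeFace (s : Finset (ι → ℝ)) (x y : ι → ℝ) : Finset (ι → ℝ) :=
  s.filter fun v => ∀ i, x i = y i → v i = x i

theorem mem_cubeFace {s : Finset (ι → ℝ)} {x y v : ι → ℝ} :
    v ∈ cubeFace s x y ↔ v ∈ s ∧ ∀ i, x i = y i → v i = x i :=
  Finset.mem_filter

theorem cubeFace_subset (s : Finset (ι → ℝ)) (x y : ι → ℝ) : cubeFace s x y ⊆ s :=
  Finset.filter_subset _ s

variable [Fintype ι]

theorem IsBinary.dotProduct_le_and_eq_iff {x y v : ι → ℝ} (hx : IsBinary x)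
    (hy : IsBinary y) (hv : IsBinary v) :
    (x + y - 1) ⬝ᵥ v ≤ (x + y - 1) ⬝ᵥ x ∧
      ((x + y - 1) ⬝ᵥ v = (x + y - 1) ⬝ᵥ x ↔ ∀ i, x i = y i → v i = x i) := by
  have hcoord : ∀ i, (x + y - 1) i * v i ≤ (x + y - 1) i * x i ∧
      ((x + y - 1) i * v i = (x + y - 1) i * x i ↔ (x i = y i → v i = x i)) := by
    intro i
    simp only [Pi.sub_apply, Pi.add_apply, Pi.one_apply]
    rcases hx i with h | h <;> rcases hy i with h' | h' <;> rcases hv i with h'' | h'' <;>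
      simp [h, h', h'']
  have hle : ∀ i ∈ Finset.univ, (x + y - 1) i * v i ≤ (x + y - 1) i * x i :=
    fun i _ => (hcoord i).1
  refine ⟨Finset.sum_le_sum hle, ?_⟩
  rw [dotProduct, dotProduct, Finset.sum_eq_sum_iff_of_le hle]
  simp only [Finset.mem_univ, true_implies, hcoord]

theorem IsBinary.dotProduct_lt_of_ne {x v : ι → ℝ} (hx : IsBinary x) (hv : IsBinary v)
    (hvx : v ≠ x) : (x + x - 1) ⬝ᵥ v < (x + x - 1) ⬝ᵥ x := by
  obtain ⟨hle, heq⟩ := hx.dotProduct_le_and_eq_iff hx hv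
  exact hle.lt_of_ne fun h => hvx (funext fun i => heq.1 h i rfl)

theorem isExtreme_convexHull_cubeFace {s : Finset (ι → ℝ)} (hs : ∀ v ∈ s, IsBinary v)
    {x y : ι → ℝ} (hx : IsBinary x) (hy : IsBinary y) :
    IsExtreme ℝ (convexHull ℝ (s : Set (ι → ℝ)))
      (convexHull ℝ (cubeFace s x y : Set (ι → ℝ))) := by
  have hface : cubeFace s x y = s.filter ((x + y - 1) ⬝ᵥ · = (x + y - 1) ⬝ᵥ x) := by
    ext v
    rw [mem_cubeFace, Finset.mem_filter]
    exact and_congr_right fun hv => ((hx.dotProduct_le_and_eq_iff hy (hs v hv)).2).symm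
  rw [hface]
  exact isExtreme_convexHull_filter_apply_eq (l := dotProductBilin ℝ ℝ (x + y - 1))
    fun v hv => (hx.dotProduct_le_and_eq_iff hy (hs v hv)).1

theorem cubeFace_eq_pair {s : Finset (ι → ℝ)} (hs : ∀ v ∈ s, IsBinary v) {x y : ι → ℝ}
    (hx : x ∈ s) (hy : y ∈ s)
    (hmin : ∀ v ∈ s, v ≠ x → hammingDist x y ≤ hammingDist x v) :
    cubeFace s x y = {x, y} := by
  ext v
  simp only [mem_cubeFace, Finset.mem_insert, Finset.mem_singleton]
  constructor
  · rintro ⟨hv, hagree⟩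
    refine or_iff_not_imp_left.2 fun hvx => ?_
    have hsub : ({i | x i ≠ v i} : Finset ι) ⊆ ({i | x i ≠ y i} : Finset ι) := fun i => by
      simp only [Finset.mem_filter, Finset.mem_univ, true_and]
      exact mt fun hxy => (hagree i hxy).symm
    have hdiff := Finset.eq_of_subset_of_card_le hsub (hmin v hv hvx)
    funext i
    by_cases hxy : x i = y i
    · rw [hagree i hxy, hxy]
    · have hxv : x i ≠ v i := by
        simpa using (Finset.ext_iff.1 hdiff i).2 (by simpa using hxy)
      exact (hs x hx).eq_of_ne_of_ne (hs y hy) (hs v hv) (Ne.symm hxv) (Ne.symm hxy)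
  · rintro (rfl | rfl)
    · exact ⟨hx, fun _ _ => rfl⟩
    · exact ⟨hy, fun _ h => h.symm⟩

theorem isExtreme_segment_of_forall_hammingDist_le {s : Finset (ι → ℝ)}
    (hs : ∀ v ∈ s, IsBinary v) {x y : ι → ℝ} (hx : x ∈ s) (hy : y ∈ s)
    (hmin : ∀ v ∈ s, v ≠ x → hammingDist x y ≤ hammingDist x v) :
    IsExtreme ℝ (convexHull ℝ (s : Set (ι → ℝ))) (segment ℝ x y) := by
  simpa [cubeFace_eq_pair hs hx hy hmin, convexHull_pair] using
    isExtreme_convexHull_cubeFace hs (hs x hx) (hs y hy)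

theorem hammingDist_lt_of_agree {x y v : ι → ℝ} (hx : IsBinary x) (hy : IsBinary y)
    (hv : IsBinary v) (hagree : ∀ i, x i = y i → v i = x i) (hvx : v ≠ x) :
    hammingDist v y < hammingDist x y := by
  obtain ⟨i, hi⟩ := Function.ne_iff.1 hvx
  have hxy : x i ≠ y i := mt (hagree i) hi
  refine Finset.card_lt_card ((Finset.ssubset_iff_of_subset fun j => ?_).2 ⟨i, ?_, ?_⟩)
  · simp only [Finset.mem_filter, Finset.mem_univ, true_and]
    exact mt fun hxy => (hagree j hxy).trans hxy
  · simpa using hxy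
  · simpa using hx.eq_of_ne_of_ne hy hv hi (Ne.symm hxy)

end Binary

section Improving

variable {ι : Type*} [Fintype ι]

theorem exists_improving_face {s : Finset (ι → ℝ)} (hs : ∀ v ∈ s, IsBinary v)
    {c x u : ι → ℝ} (hx : x ∈ s) (hu : u ∈ s) (hxu : c ⬝ᵥ x < c ⬝ᵥ u) :
    ∃ t ⊆ s, x ∈ t ∧ (∃ v ∈ t, v ≠ x) ∧ (∀ v ∈ t, v ≠ x → c ⬝ᵥ x < c ⬝ᵥ v) ∧
      IsExtreme ℝ (convexHull ℝ (s : Set (ι → ℝ))) (convexHull ℝ (t : Set (ι → ℝ))) := by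
  set w := x + x - 1
  have hgap : ∀ v ∈ s, v ≠ x → 0 < w ⬝ᵥ x - w ⬝ᵥ v := fun v hv hvx =>
    sub_pos.2 ((hs x hx).dotProduct_lt_of_ne (hs v hv) hvx)
  set slope : (ι → ℝ) → ℝ := fun v => (c ⬝ᵥ v - c ⬝ᵥ x) / (w ⬝ᵥ x - w ⬝ᵥ v)
  have hslope : ∀ v ∈ s, v ≠ x → slope v * (w ⬝ᵥ x - w ⬝ᵥ v) = c ⬝ᵥ v - c ⬝ᵥ x :=
    fun v hv hvx => div_mul_cancel₀ _ (hgap v hv hvx).ne'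
  have hux : u ≠ x := fun h => (h ▸ hxu).false
  obtain ⟨vb, hvb, hvb_max⟩ :=
    (s.erase x).exists_max_image slope ⟨u, Finset.mem_erase.2 ⟨hux, hu⟩⟩
  obtain ⟨hvbx, hvb⟩ := Finset.mem_erase.1 hvb
  set T := slope vb
  have hT : 0 < T := (div_pos (sub_pos.2 hxu) (hgap u hu hux)).trans_le
    (hvb_max u (Finset.mem_erase.2 ⟨hux, hu⟩))
  have htilt : ∀ v ∈ s, v ≠ x →
      (c + T • w) ⬝ᵥ x - (c + T • w) ⬝ᵥ v = (w ⬝ᵥ x - w ⬝ᵥ v) * (T - slope v) := by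
    intro v hv hvx
    simp only [add_dotProduct, smul_dotProduct, smul_eq_mul]
    linear_combination hslope v hv hvx
  have hmax : ∀ v ∈ s, (c + T • w) ⬝ᵥ v ≤ (c + T • w) ⬝ᵥ x := by
    intro v hv
    rcases eq_or_ne v x with rfl | hvx
    · exact le_rfl
    have := mul_nonneg (hgap v hv hvx).le
      (sub_nonneg.2 (hvb_max v (Finset.mem_erase.2 ⟨hvx, hv⟩)))
    linarith [htilt v hv hvx]
  refine ⟨s.filter ((c + T • w) ⬝ᵥ · = (c + T • w) ⬝ᵥ x), Finset.filter_subset _ s,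
    Finset.mem_filter.2 ⟨hx, rfl⟩, ⟨vb, Finset.mem_filter.2 ⟨hvb, ?_⟩, hvbx⟩, ?_,
    isExtreme_convexHull_filter_apply_eq (l := dotProductBilin ℝ ℝ (c + T • w)) hmax⟩
  · have := htilt vb hvb hvbx
    rw [sub_self, mul_zero, sub_eq_zero] at this
    exact this.symm
  · intro v hv hvx
    obtain ⟨hv, htop⟩ := Finset.mem_filter.1 hv
    have hslope_v : slope v = T := by
      have := htilt v hv hvx
      rw [htop, sub_self, zero_eq_mul] at this
      exact (sub_eq_zero.1 (this.resolve_left (hgap v hv hvx).ne')).symm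
    nlinarith [hslope v hv hvx, hgap v hv hvx]

theorem exists_improving_edge {s : Finset (ι → ℝ)} (hs : ∀ v ∈ s, IsBinary v)
    {c x u : ι → ℝ} (hx : x ∈ s) (hu : u ∈ s) (hxu : c ⬝ᵥ x < c ⬝ᵥ u) :
    ∃ y ∈ s, y ≠ x ∧ c ⬝ᵥ x < c ⬝ᵥ y ∧
      IsExtreme ℝ (convexHull ℝ (s : Set (ι → ℝ))) (segment ℝ x y) := by
  obtain ⟨t, hts, hxt, ⟨v, hvt, hvx⟩, himp, hface⟩ := exists_improving_face hs hx hu hxu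
  obtain ⟨y, hy, hy_min⟩ :=
    (t.erase x).exists_min_image (hammingDist x) ⟨v, Finset.mem_erase.2 ⟨hvx, hvt⟩⟩
  obtain ⟨hyx, hyt⟩ := Finset.mem_erase.1 hy
  refine ⟨y, hts hyt, hyx, himp y hyt hyx, hface.trans ?_⟩
  exact isExtreme_segment_of_forall_hammingDist_le (fun v hv => hs v (hts hv)) hxt hyt
    fun v hv hvx => hy_min v (Finset.mem_erase.2 ⟨hvx, hv⟩)

end Improving

section MonotonePath

variable {n : ℕ}

def IsMonotonePath (P : Set (Fin n → ℝ)) (c : Fin n → ℝ) (k : ℕ) (x : ℕ → Fin n → ℝ) :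
    Prop :=
  (∀ i ≤ k, IsVertex P (x i)) ∧
    ∀ i < k, Adjacent P (x i) (x (i + 1)) ∧ dotR c (x i) < dotR c (x (i + 1))

def pathCons {α : Type*} (a : α) (x : ℕ → α) : ℕ → α
  | 0 => a
  | i + 1 => x i

theorem isMonotonePath_zero {P : Set (Fin n → ℝ)} {c : Fin n → ℝ} {x : ℕ → Fin n → ℝ}
    (hx : IsVertex P (x 0)) : IsMonotonePath P c 0 x :=
  ⟨fun _ hi => Nat.le_zero.1 hi ▸ hx, fun _ hi => absurd hi (Nat.not_lt_zero _)⟩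

theorem IsMonotonePath.cons {P : Set (Fin n → ℝ)} {c a : Fin n → ℝ} {k : ℕ}
    {x : ℕ → Fin n → ℝ} (hpath : IsMonotonePath P c k x) (hadj : Adjacent P a (x 0))
    (hlt : dotR c a < dotR c (x 0)) : IsMonotonePath P c (k + 1) (pathCons a x) := by
  refine ⟨fun i hi => ?_, fun i hi => ?_⟩
  · cases i with
    | zero => exact hadj.1
    | succ i => exact hpath.1 i (by omega)
  · cases i with
    | zero => exact ⟨hadj, hlt⟩
    | succ i => exact hpath.2 i (by omega)

theorem exists_isMonotonePath {V : Finset (Fin n → ℝ)} (hV : ∀ v ∈ V, IsBinary v)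
    {c xs : Fin n → ℝ} (hxs : xs ∈ V) (hxs_max : ∀ v ∈ V, dotR c v ≤ dotR c xs)
    {x0 : Fin n → ℝ} (hx0 : x0 ∈ V) :
    ∃ k ≤ hammingDist x0 xs, ∃ x : ℕ → Fin n → ℝ, x 0 = x0 ∧
      IsMonotonePath (convexHull ℝ (V : Set (Fin n → ℝ))) c k x ∧
      ∀ v ∈ V, dotR c v ≤ dotR c (x k) := by
  induction hd : hammingDist x0 xs using Nat.strong_induction_on generalizing x0 with
  | _ d ih =>
  have hvertex : ∀ v ∈ V, IsVertex (convexHull ℝ (V : Set (Fin n → ℝ))) v :=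
    fun v hv => mem_extremePoints_convexHull_of_isBinary hV hv
  by_cases hopt : ∀ v ∈ V, dotR c v ≤ dotR c x0
  · exact ⟨0, Nat.zero_le _, fun _ => x0, rfl, isMonotonePath_zero (hvertex x0 hx0), hopt⟩
  have hlt : dotR c x0 < dotR c xs := by
    obtain ⟨v, hv, hx0v⟩ : ∃ v ∈ V, dotR c x0 < dotR c v := by simpa using hopt
    exact hx0v.trans_le (hxs_max v hv)
  obtain ⟨y, hyF, hyx, hcy, hedge⟩ :=
    exists_improving_edge (fun v hv => hV v (cubeFace_subset V x0 xs hv))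
      (mem_cubeFace.2 ⟨hx0, fun _ _ => rfl⟩) (mem_cubeFace.2 ⟨hxs, fun _ h => h.symm⟩) hlt
  obtain ⟨hy, hagree⟩ := mem_cubeFace.1 hyF
  have hadj : Adjacent (convexHull ℝ (V : Set (Fin n → ℝ))) x0 y :=
    ⟨hvertex x0 hx0, hvertex y hy, hyx.symm,
      (isExtreme_convexHull_cubeFace hV (hV x0 hx0) (hV xs hxs)).trans hedge⟩
  have hcloser := hammingDist_lt_of_agree (hV x0 hx0) (hV xs hxs) (hV y hy) hagree hyx
  obtain ⟨k, hk, x, rfl, hpath, hmax⟩ := ih _ (hd ▸ hcloser) hy rfl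
  exact ⟨k + 1, by omega, pathCons x0 x, rfl, hpath.cons hadj hcy, hmax⟩

end MonotonePath

/-- Monotone-path version of Theorem 1.2: from any vertex of a 0/1 polytope there is
a strictly `c`-monotone path of length at most `n` on the 1-skeleton ending at a
`c`-maximum. -/
theorem monotone_path_length_le_ambient_dim {n : ℕ} (P : Set (Fin n → ℝ))
    (hP : IsPolytope01 P) (c : Fin n → ℝ) (x0 : Fin n → ℝ) (hx0 : IsVertex P x0) :
    ∃ (k : ℕ) (x : ℕ → Fin n → ℝ), k ≤ n ∧ x 0 = x0 ∧
      (∀ i ≤ k, IsVertex P (x i)) ∧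
      (∀ i < k, Adjacent P (x i) (x (i + 1)) ∧ dotR c (x i) < dotR c (x (i + 1))) ∧
      ∀ y ∈ P, dotR c y ≤ dotR c (x k) := by
  obtain ⟨V, hV_ne, hV, rfl⟩ := hP
  obtain ⟨xs, hxs, hxs_max⟩ := V.exists_max_image (dotR c) hV_ne
  have hx0V : x0 ∈ V := by exact_mod_cast extremePoints_convexHull_subset hx0
  obtain ⟨k, hk, x, hx_0, ⟨hvertex, hstep⟩, hmax⟩ := exists_isMonotonePath hV hxs hxs_max hx0V
  refine ⟨k, x, hk.trans (hammingDist_le_card_fintype.trans (Fintype.card_fin n).le), hx_0,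
    hvertex, hstep, fun y hy => ?_⟩
  exact apply_le_of_mem_convexHull (l := dotProductBilin ℝ ℝ c) hmax hy
end
end

section
/- For every 0/1 polytope P ⊆ ℝ^n of dimension d, every c ∈ ℝ^n, and every vertex x⁰ of P, there exists a finite sequence of vertices x⁰, x¹, …, x^k of P with k ≤ d such that for each i < k the vertices x^i and x^{i+1} are adjacent and ⟨c, x^i⟩ < ⟨c, x^{i+1}⟩, and x^k maximizes ⟨c,·⟩ over P. -/
open Finset

attribute [local instance] Classical.propDecidable

noncomputable section

/-!
Induction on the dimension. Fix a vertex `z` maximizing `c`. If `z` agrees with `x⁰` on a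
coordinate that is not constant on `P`, fixing that coordinate cuts out a lower-dimensional face
containing both, and we recurse there. Otherwise `z` is antipodal to `x⁰` on every non-constant
coordinate. Then any improving neighbour `u` of `x⁰` leaves `x⁰` on some coordinate, where it
agrees with `z`; the face fixing that coordinate contains `u` and `z` but not `x⁰`, so one edge
plus a path in that face of smaller dimension suffices.

Improving neighbours exist by the same face-descent: when no improving vertex shares a
non-constant coordinate with `x⁰`, there is exactly one improving vertex `z`, and the segment
`[x⁰, z]` is exposed by a combination of `c` and `⟨z - x⁰, ·⟩`.
-/

section Faces

variable {𝕜 E : Type*} [Field 𝕜] [LinearOrder 𝕜] [IsStrictOrderedRing 𝕜]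
  [AddCommGroup E] [Module 𝕜 E]

theorem LinearMap.apply_le_of_mem_convexHull {s : Set E} {l : E →ₗ[𝕜] 𝕜} {M : 𝕜}
    (hle : ∀ w ∈ s, l w ≤ M) {p : E} (hp : p ∈ convexHull 𝕜 s) : l p ≤ M :=
  convexHull_min hle (convex_halfSpace_le l.isLinear M) hp

theorem mem_convexHull_filter_of_apply_eq_max {V : Finset E} {l : E →ₗ[𝕜] 𝕜} {M : 𝕜}
    (hle : ∀ w ∈ V, l w ≤ M) {p : E} (hp : p ∈ convexHull 𝕜 (V : Set E)) (hpM : l p = M) :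
    p ∈ convexHull 𝕜 (V.filter fun w => l w = M : Set E) := by
  obtain ⟨α, hα0, hα1, rfl⟩ := Finset.mem_convexHull'.1 hp
  have hdefect : ∑ w ∈ V, α w * (M - l w) = 0 := by
    simp only [map_sum, map_smul, smul_eq_mul] at hpM
    simp only [mul_sub, Finset.sum_sub_distrib, ← Finset.sum_mul, hα1, one_mul, hpM, sub_self]
  have hsupp : ∀ w ∈ V, α w ≠ 0 → l w = M := by
    intro w hw hαw
    have := (Finset.sum_eq_zero_iff_of_nonneg fun w hw =>
      mul_nonneg (hα0 w hw) (sub_nonneg.2 (hle w hw))).1 hdefect w hw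
    exact (sub_eq_zero.1 ((mul_eq_zero.1 this).resolve_left hαw)).symm
  refine Finset.mem_convexHull'.2 ⟨α, fun w hw => hα0 w (Finset.mem_filter.1 hw).1, ?_, ?_⟩
  · rwa [Finset.sum_filter_of_ne hsupp]
  · exact Finset.sum_filter_of_ne fun w hw hne => hsupp w hw fun h => hne (by simp [h])

theorem isExtreme_convexHull_filter_apply_eq_max {V : Finset E} {l : E →ₗ[𝕜] 𝕜} {M : 𝕜}
    (hle : ∀ w ∈ V, l w ≤ M) :
    IsExtreme 𝕜 (convexHull 𝕜 (V : Set E)) (convexHull 𝕜 (V.filter fun w => l w = M : Set E)) := by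
  refine ⟨convexHull_mono (Finset.coe_subset.2 (Finset.filter_subset _ _)),
    fun x₁ hx₁ x₂ hx₂ p hp hseg => ?_⟩
  have hpM : l p = M :=
    convexHull_min (fun w hw => (Finset.mem_filter.1 hw).2) (convex_hyperplane l.isLinear M) hp
  have h₁ := sub_nonneg.2 (l.apply_le_of_mem_convexHull hle hx₁)
  have h₂ := sub_nonneg.2 (l.apply_le_of_mem_convexHull hle hx₂)
  obtain ⟨a, b, ha, hb, hab, rfl⟩ := hseg
  simp only [map_add, map_smul, smul_eq_mul] at hpM
  have hdefect : a * (M - l x₁) + b * (M - l x₂) = 0 := by linear_combination M * hab - hpM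
  have hx₁M := (add_eq_zero_iff_of_nonneg (mul_nonneg ha.le h₁) (mul_nonneg hb.le h₂)).1 hdefect
  exact mem_convexHull_filter_of_apply_eq_max hle hx₁
    (sub_eq_zero.1 ((mul_eq_zero.1 hx₁M.1).resolve_left ha.ne')).symm

theorem mem_extremePoints_convexHull_of_forall_apply_lt {V : Finset E} {l : E →ₗ[𝕜] 𝕜} {z : E}
    (hz : z ∈ V) (hlt : ∀ w ∈ V, w ≠ z → l w < l z) :
    z ∈ (convexHull 𝕜 (V : Set E)).extremePoints 𝕜 := by
  have hle : ∀ w ∈ V, l w ≤ l z := fun w hw =>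
    if h : w = z then h ▸ le_rfl else (hlt w hw h).le
  have hfilter : V.filter (fun w => l w = l z) = {z} := by
    ext w
    constructor
    · intro hw
      obtain ⟨hwV, hwz⟩ := Finset.mem_filter.1 hw
      by_contra hne
      exact (hlt w hwV (by simpa using hne)).ne hwz
    · intro hw
      rw [Finset.mem_singleton.1 hw]
      exact Finset.mem_filter.2 ⟨hz, rfl⟩
  have := isExtreme_convexHull_filter_apply_eq_max hle
  rwa [hfilter, Finset.coe_singleton, convexHull_singleton, isExtreme_singleton] at this

theorem isExtreme_segment_of_unique_improvement {V : Finset E} {c g : E →ₗ[𝕜] 𝕜} {x z : E}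
    (hx : x ∈ V) (hz : z ∈ V) (hxz : c x < c z) (hc : ∀ w ∈ V, w ≠ z → c w ≤ c x)
    (hg : ∀ w ∈ V, w ≠ x → g x < g w) :
    IsExtreme 𝕜 (convexHull 𝕜 (V : Set E)) (segment 𝕜 x z) := by
  have hzx : z ≠ x := fun h => hxz.ne (by rw [h])
  have hgz := hg z hz hzx
  -- `l` vanishes at `x` and `z` and is negative at every other point of `V`
  set l : E →ₗ[𝕜] 𝕜 := (g z - g x) • c - (c z - c x) • g
  have hl : ∀ w, l w - l x = (g z - g x) * (c w - c x) - (c z - c x) * (g w - g x) := by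
    intro w
    simp only [l, LinearMap.sub_apply, LinearMap.smul_apply, smul_eq_mul]
    ring
  have hlt : ∀ w ∈ V, w ≠ x → w ≠ z → l w < l x := by
    intro w hw hwx hwz
    have := mul_nonpos_of_nonneg_of_nonpos (sub_nonneg.2 hgz.le) (sub_nonpos.2 (hc w hw hwz))
    have := mul_pos (sub_pos.2 hxz) (sub_pos.2 (hg w hw hwx))
    linarith [hl w]
  have hfilter : V.filter (fun w => l w = l x) = {x, z} := by
    ext w
    simp only [Finset.mem_filter, Finset.mem_insert, Finset.mem_singleton]
    constructor
    · rintro ⟨hw, hwl⟩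
      by_contra! hne
      exact (hlt w hw hne.1 hne.2).ne hwl
    · rintro (rfl | rfl)
      · exact ⟨hx, rfl⟩
      · exact ⟨hz, by linarith [hl w]⟩
  have := isExtreme_convexHull_filter_apply_eq_max (l := l) (M := l x) fun w hw =>
    if hwx : w = x then hwx ▸ le_rfl else if hwz : w = z then by rw [hwz]; linarith [hl z]
    else (hlt w hw hwx hwz).le
  rwa [hfilter, Finset.coe_pair, convexHull_pair] at this

end Faces

theorem finrank_vectorSpan_lt_of_apply_ne {K E : Type*} [Field K] [AddCommGroup E] [Module K E]
    [FiniteDimensional K E] {S T : Set E} (hST : S ⊆ T) (l : E →ₗ[K] K) {a : K}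
    (hS : ∀ p ∈ S, l p = a) {x y : E} (hx : x ∈ T) (hy : y ∈ S) (hxa : l x ≠ a) :
    Module.finrank K (vectorSpan K S) < Module.finrank K (vectorSpan K T) := by
  have hker : vectorSpan K S ≤ LinearMap.ker l := by
    rw [vectorSpan_def, Submodule.span_le]
    rintro _ ⟨p, hp, q, hq, rfl⟩
    simp [hS p hp, hS q hq]
  have hxy : x -ᵥ y ∈ vectorSpan K T := vsub_mem_vectorSpan K hx (hST hy)
  have hxy' : x -ᵥ y ∉ vectorSpan K S := fun h =>
    hxa (by simpa [hS y hy, sub_eq_zero] using hker h)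
  exact Submodule.finrank_lt_finrank_of_lt
    (lt_of_le_of_ne (vectorSpan_mono K hST) fun h => hxy' (h ▸ hxy))

theorem eq_of_ne_of_ne_of_zero_or_one {a b x : ℝ} (ha : a = 0 ∨ a = 1) (hb : b = 0 ∨ b = 1)
    (hx : x = 0 ∨ x = 1) (hax : a ≠ x) (hbx : b ≠ x) : a = b := by
  rcases ha with rfl | rfl <;> rcases hb with rfl | rfl <;> rcases hx with rfl | rfl <;>
    norm_num at *

section ZeroOne

variable {n : ℕ}

theorem dotR_sub_sub_pos {x z w : Fin n → ℝ} (hx : ∀ i, x i = 0 ∨ x i = 1)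
    (hz : ∀ i, z i = 0 ∨ z i = 1) (hw : ∀ i, w i = 0 ∨ w i = 1)
    (hzw : ∀ i, w i ≠ x i → z i ≠ x i) (hwx : w ≠ x) : 0 < dotR (z - x) (w - x) := by
  obtain ⟨j, hj⟩ := Function.ne_iff.1 hwx
  refine Finset.sum_pos' (fun i _ => ?_) ⟨j, Finset.mem_univ j, ?_⟩
  · rcases hx i with h | h <;> rcases hz i with h' | h' <;> rcases hw i with h'' | h'' <;>
      simp [h, h', h'']
  · have hzj := hzw j hj
    rcases hx j with h | h <;> rcases hz j with h' | h' <;> rcases hw j with h'' | h'' <;>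
      simp_all

def coordFace (V : Finset (Fin n → ℝ)) (i : Fin n) (a : ℝ) : Finset (Fin n → ℝ) :=
  V.filter fun w => w i = a

theorem mem_coordFace {V : Finset (Fin n → ℝ)} {i : Fin n} {a : ℝ} {w : Fin n → ℝ} :
    w ∈ coordFace V i a ↔ w ∈ V ∧ w i = a :=
  Finset.mem_filter

theorem coordFace_subset (V : Finset (Fin n → ℝ)) (i : Fin n) (a : ℝ) : coordFace V i a ⊆ V :=
  Finset.filter_subset _ _

theorem isExtreme_coordFace {V : Finset (Fin n → ℝ)} (hV : ∀ w ∈ V, ∀ i, w i = 0 ∨ w i = 1)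
    (i : Fin n) {a : ℝ} (ha : a = 0 ∨ a = 1) :
    IsExtreme ℝ (convexHull ℝ (V : Set (Fin n → ℝ)))
      (convexHull ℝ (coordFace V i a : Set (Fin n → ℝ))) := by
  set l : (Fin n → ℝ) →ₗ[ℝ] ℝ := (2 * a - 1) • LinearMap.proj i
  have hl : ∀ w ∈ V, l w ≤ a ∧ (l w = a ↔ w i = a) := by
    intro w hw
    simp only [l, LinearMap.smul_apply, LinearMap.proj_apply, smul_eq_mul]
    rcases ha with rfl | rfl <;> rcases hV w hw i with h | h <;> norm_num [h]
  have hface : coordFace V i a = V.filter fun w => l w = a :=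
    Finset.filter_congr fun w hw => (hl w hw).2.symm
  rw [hface]
  exact isExtreme_convexHull_filter_apply_eq_max fun w hw => (hl w hw).1

theorem finrank_coordFace_lt {V : Finset (Fin n → ℝ)} {i : Fin n} {a : ℝ} {x y : Fin n → ℝ}
    (hy : y ∈ coordFace V i a) (hx : x ∈ V) (hxa : x i ≠ a) :
    Module.finrank ℝ (vectorSpan ℝ (coordFace V i a : Set (Fin n → ℝ)))
      < Module.finrank ℝ (vectorSpan ℝ (V : Set (Fin n → ℝ))) :=
  finrank_vectorSpan_lt_of_apply_ne (Finset.coe_subset.2 (coordFace_subset V i a))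
    (LinearMap.proj i) (fun _ hp => (mem_coordFace.1 hp).2) hx hy hxa

theorem IsExtreme.isVertex_iff {P F : Set (Fin n → ℝ)} (hF : IsExtreme ℝ P F) {x : Fin n → ℝ} :
    IsVertex F x ↔ x ∈ F ∧ IsVertex P x := by
  rw [IsVertex, IsVertex, hF.extremePoints_eq]
  rfl

theorem IsExtreme.adjacent {P F : Set (Fin n → ℝ)} (hF : IsExtreme ℝ P F) {x y : Fin n → ℝ}
    (h : Adjacent F x y) : Adjacent P x y :=
  ⟨(hF.isVertex_iff.1 h.1).2, (hF.isVertex_iff.1 h.2.1).2, h.2.2.1, hF.trans h.2.2.2⟩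

theorem exists_adjacent_improving {V : Finset (Fin n → ℝ)} (hV : ∀ w ∈ V, ∀ i, w i = 0 ∨ w i = 1)
    {c x z : Fin n → ℝ} (hx : IsVertex (convexHull ℝ (V : Set (Fin n → ℝ))) x) (hz : z ∈ V)
    (hxz : dotR c x < dotR c z) :
    ∃ u, Adjacent (convexHull ℝ (V : Set (Fin n → ℝ))) x u ∧ dotR c x < dotR c u := by
  induction h : Module.finrank ℝ (vectorSpan ℝ (V : Set (Fin n → ℝ)))
    using Nat.strong_induction_on generalizing V z with
  | _ d IH =>
  have hxV : x ∈ V := extremePoints_convexHull_subset hx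
  by_cases hface : ∃ w ∈ V, dotR c x < dotR c w ∧ ∃ i, w i = x i ∧ ∃ w' ∈ V, w' i ≠ x i
  · obtain ⟨w, hw, hxw, i, hwi, w', hw', hw'i⟩ := hface
    have hF := isExtreme_coordFace hV i (hV x hxV i)
    have hxF : x ∈ coordFace V i (x i) := mem_coordFace.2 ⟨hxV, rfl⟩
    obtain ⟨u, hu, hxu⟩ := IH _ (h ▸ finrank_coordFace_lt hxF hw' hw'i)
      (fun w hw => hV w (coordFace_subset V i _ hw))
      (hF.isVertex_iff.2 ⟨subset_convexHull ℝ _ hxF, hx⟩) (mem_coordFace.2 ⟨hw, hwi⟩) hxw rfl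
    exact ⟨u, hF.adjacent hu, hxu⟩
  push Not at hface
  have hanti : ∀ w ∈ V, dotR c x < dotR c w → ∀ w' ∈ V, ∀ i, w' i ≠ x i → w i ≠ x i :=
    fun w hw hxw w' hw' i hw'i hwi => hw'i (hface w hw hxw i hwi w' hw')
  have hz_unique : ∀ w ∈ V, w ≠ z → dotR c w ≤ dotR c x := by
    intro w hw hwz
    by_contra! hxw
    refine hwz (funext fun i => ?_)
    by_cases hi : ∃ w' ∈ V, w' i ≠ x i
    · obtain ⟨w', hw', hw'i⟩ := hi
      exact eq_of_ne_of_ne_of_zero_or_one (hV w hw i) (hV z hz i) (hV x hxV i)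
        (hanti w hw hxw w' hw' i hw'i) (hanti z hz hxz w' hw' i hw'i)
    · push Not at hi
      rw [hi w hw, hi z hz]
  have hx_unique : ∀ w ∈ V, w ≠ x → dotR (z - x) x < dotR (z - x) w := by
    intro w hw hwx
    have := dotR_sub_sub_pos (hV x hxV) (hV z hz) (hV w hw)
      (fun i hwi => hanti z hz hxz w hw i hwi) hwx
    rw [← sub_pos]
    exact (map_sub (dotProductBilin ℝ ℝ (z - x)) w x) ▸ this
  have hzvert : IsVertex (convexHull ℝ (V : Set (Fin n → ℝ))) z :=
    mem_extremePoints_convexHull_of_forall_apply_lt (l := dotProductBilin ℝ ℝ c) hz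
      fun w hw hwz => (hz_unique w hw hwz).trans_lt hxz
  have hedge := isExtreme_segment_of_unique_improvement
    (c := dotProductBilin ℝ ℝ c) (g := dotProductBilin ℝ ℝ (z - x)) hxV hz hxz hz_unique hx_unique
  exact ⟨z, ⟨hx, hzvert, fun h => hxz.ne (by rw [h]), hedge⟩, hxz⟩

theorem IsMonotonePath.of_isExtreme {P F : Set (Fin n → ℝ)} (hF : IsExtreme ℝ P F)
    {c : Fin n → ℝ} {k : ℕ} {x : ℕ → Fin n → ℝ} (h : IsMonotonePath F c k x) :
    IsMonotonePath P c k x :=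
  ⟨fun i hi => (hF.isVertex_iff.1 (h.1 i hi)).2,
    fun i hi => ⟨hF.adjacent (h.2 i hi).1, (h.2 i hi).2⟩⟩

theorem IsMonotonePath.cons_s15 {P : Set (Fin n → ℝ)} {c y : Fin n → ℝ} {k : ℕ}
    {x : ℕ → Fin n → ℝ} (h : IsMonotonePath P c k x) (hy : Adjacent P y (x 0))
    (hcy : dotR c y < dotR c (x 0)) :
    IsMonotonePath P c (k + 1) (fun j => Nat.casesOn j y x) := by
  refine ⟨fun i hi => ?_, fun i hi => ?_⟩
  · cases i with
    | zero => exact hy.1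
    | succ i => exact h.1 i (by omega)
  · cases i with
    | zero => exact ⟨hy, hcy⟩
    | succ i => exact h.2 i (by omega)

theorem exists_monotonePath {V : Finset (Fin n → ℝ)} (hV : ∀ w ∈ V, ∀ i, w i = 0 ∨ w i = 1)
    {c x₀ z : Fin n → ℝ} (hx₀ : IsVertex (convexHull ℝ (V : Set (Fin n → ℝ))) x₀) (hz : z ∈ V)
    (hzmax : ∀ w ∈ V, dotR c w ≤ dotR c z) :
    ∃ k x, k ≤ Module.finrank ℝ (vectorSpan ℝ (V : Set (Fin n → ℝ))) ∧ x 0 = x₀ ∧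
      IsMonotonePath (convexHull ℝ (V : Set (Fin n → ℝ))) c k x ∧ dotR c z ≤ dotR c (x k) := by
  induction h : Module.finrank ℝ (vectorSpan ℝ (V : Set (Fin n → ℝ)))
    using Nat.strong_induction_on generalizing V x₀ with
  | _ d IH =>
  have hx₀V : x₀ ∈ V := extremePoints_convexHull_subset hx₀
  by_cases hopt : dotR c z ≤ dotR c x₀
  · exact ⟨0, fun _ => x₀, Nat.zero_le _, rfl,
      ⟨fun _ _ => hx₀, fun _ hi => absurd hi (Nat.not_lt_zero _)⟩, hopt⟩
  have descend : ∀ y i, IsVertex (convexHull ℝ (V : Set (Fin n → ℝ))) y → z i = y i →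
      ∀ w ∈ V, w i ≠ y i → ∃ k x, k < d ∧ x 0 = y ∧
        IsMonotonePath (convexHull ℝ (V : Set (Fin n → ℝ))) c k x ∧ dotR c z ≤ dotR c (x k) := by
    intro y i hy hzi w hw hwi
    have hyF : y ∈ coordFace V i (y i) := mem_coordFace.2 ⟨extremePoints_convexHull_subset hy, rfl⟩
    have hF := isExtreme_coordFace hV i (hV y (mem_coordFace.1 hyF).1 i)
    have hlt := h ▸ finrank_coordFace_lt hyF hw hwi
    obtain ⟨k, x, hk, hx0, hpath, hmax⟩ := IH _ hlt (fun w hw => hV w (coordFace_subset V i _ hw))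
      (hF.isVertex_iff.2 ⟨subset_convexHull ℝ _ hyF, hy⟩) (mem_coordFace.2 ⟨hz, hzi⟩)
      (fun w hw => hzmax w (coordFace_subset V i _ hw)) rfl
    exact ⟨k, x, hk.trans_lt hlt, hx0, hpath.of_isExtreme hF, hmax⟩
  by_cases hcommon : ∃ i, z i = x₀ i ∧ ∃ w ∈ V, w i ≠ x₀ i
  · obtain ⟨i, hzi, w, hw, hwi⟩ := hcommon
    obtain ⟨k, x, hk, hpath⟩ := descend x₀ i hx₀ hzi w hw hwi
    exact ⟨k, x, hk.le, hpath⟩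
  push Not at hcommon
  -- `z` differs from `x₀` wherever `V` does, so it agrees with the improving neighbour `u`
  -- on a coordinate where `u` leaves `x₀`
  obtain ⟨u, hu, hx₀u⟩ := exists_adjacent_improving hV hx₀ hz (not_le.1 hopt)
  have huV : u ∈ V := extremePoints_convexHull_subset hu.2.1
  obtain ⟨i, hi⟩ := Function.ne_iff.1 hu.2.2.1.symm
  have hzi : z i = u i := eq_of_ne_of_ne_of_zero_or_one (hV z hz i) (hV u huV i) (hV x₀ hx₀V i)
    (fun h' => hi (hcommon i h' u huV)) hi
  obtain ⟨k, x, hk, hx0, hpath, hmax⟩ := descend u i hu.2.1 hzi x₀ hx₀V (Ne.symm hi)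
  exact ⟨k + 1, fun j => Nat.casesOn j x₀ x, hk, rfl,
    hpath.cons_s15 (hx0 ▸ hu) (hx0 ▸ hx₀u), hmax⟩

end ZeroOne

/-- Monotone-path version of Theorem 1.3: from any vertex of a 0/1 polytope of
dimension `d` there is a strictly `c`-monotone path of length at most `d` on the
1-skeleton ending at a `c`-maximum. -/
theorem monotone_path_length_le_dim {n : ℕ} (P : Set (Fin n → ℝ))
    (hP : IsPolytope01 P)
    (d : ℕ) (hd : Module.finrank ℝ (affineSpan ℝ P).direction = d)
    (c : Fin n → ℝ) (x0 : Fin n → ℝ) (hx0 : IsVertex P x0) :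
    ∃ (k : ℕ) (x : ℕ → Fin n → ℝ), k ≤ d ∧ x 0 = x0 ∧
      (∀ i ≤ k, IsVertex P (x i)) ∧
      (∀ i < k, Adjacent P (x i) (x (i + 1)) ∧ dotR c (x i) < dotR c (x (i + 1))) ∧
      ∀ y ∈ P, dotR c y ≤ dotR c (x k) := by
  obtain ⟨V, hVne, hV, rfl⟩ := hP
  rw [affineSpan_convexHull, direction_affineSpan] at hd
  obtain ⟨z, hz, hzmax⟩ := V.exists_max_image (dotR c) hVne
  obtain ⟨k, x, hk, hx, ⟨hvert, hstep⟩, hmax⟩ := exists_monotonePath hV hx0 hz hzmax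
  refine ⟨k, x, hd ▸ hk, hx, hvert, hstep, fun y hy => ?_⟩
  exact ((dotProductBilin ℝ ℝ c).apply_le_of_mem_convexHull hzmax hy).trans hmax
end
end
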